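/- Let (b, u, p) with u = (u₁, u₂) : [0,∞)×ℝ² → ℝ², b, p : [0,∞)×ℝ² → ℝ be locally bounded measurable functions satisfying, in the distributional sense on (0,∞)×ℝ²: ∂ₜu + div(u ⊗ u) + ∇p = 0, ∂ₜb + div(b u) = 0, and div u = 0. Define on [0,∞)×ℝ³ the x₃-independent fields U(t, x₁, x₂, x₃) := (u₁(t, x₁, x₂), u₂(t, x₁, x₂), 0), B(t, x₁, x₂, x₃) := (0, 0, b(t, x₁, x₂)), and π(t, x₁, x₂, x₃) := p(t, x₁, x₂) − b(t, x₁, x₂)²/2. Then (U, B, π) is a distributional solution of the three-dimensional ideal MHD equations: ∂ₜU + (U·∇)U − (curl B)×B + ∇π = 0, ∂ₜB − curl(U×B) = 0, div U = 0, and div B = 0 on (0,∞)×ℝ³. -/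

import Mathlib

open scoped BigOperators
open MeasureTheory Filter

noncomputable section

/-- Partial derivative in the time direction of a function on `ℝ × ℝᵐ`. -/
def dt {m : ℕ} (f : ℝ × (Fin m → ℝ) → ℝ) (p : ℝ × (Fin m → ℝ)) : ℝ :=
  fderiv ℝ f p (1, 0)

/-- Partial derivative in the `j`-th spatial direction of a function on `ℝ × ℝᵐ`. -/
def dx {m : ℕ} (j : Fin m) (f : ℝ × (Fin m → ℝ) → ℝ) (p : ℝ × (Fin m → ℝ)) : ℝ :=
  fderiv ℝ f p (0, Pi.single j 1)

/-- A test function of class `C_c^∞((0,∞) × ℝᵐ; ℝ)`. -/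
def IsTest {m : ℕ} (φ : ℝ × (Fin m → ℝ) → ℝ) : Prop :=
  ContDiff ℝ (⊤ : ℕ∞) φ ∧ HasCompactSupport φ ∧ tsupport φ ⊆ {p | 0 < p.1}

/-- Restriction of a point of `ℝ³` to its first two coordinates. -/
def pr2 (x : Fin 3 → ℝ) : Fin 2 → ℝ := fun i => x i.castSucc

/-- The cross product in `ℝ³`. -/
def cross3 (a c : Fin 3 → ℝ) : Fin 3 → ℝ :=
  ![a 1 * c 2 - a 2 * c 1, a 2 * c 0 - a 0 * c 2, a 0 * c 1 - a 1 * c 0]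

/-- The (three-dimensional) curl of a vector field on `ℝ × ℝ³` (in the space variables). -/
def curl3 (Ψ : ℝ × (Fin 3 → ℝ) → Fin 3 → ℝ) (p : ℝ × (Fin 3 → ℝ)) : Fin 3 → ℝ :=
  ![dx 1 (fun p' => Ψ p' 2) p - dx 2 (fun p' => Ψ p' 1) p,
    dx 2 (fun p' => Ψ p' 0) p - dx 0 (fun p' => Ψ p' 2) p,
    dx 0 (fun p' => Ψ p' 1) p - dx 1 (fun p' => Ψ p' 0) p]

/-- The `x₃`-independent velocity field `U(t,x) = (u₁, u₂, 0)(t, x₁, x₂)`. -/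
def extU (u : ℝ × (Fin 2 → ℝ) → Fin 2 → ℝ) (p : ℝ × (Fin 3 → ℝ)) : Fin 3 → ℝ :=
  ![u (p.1, pr2 p.2) 0, u (p.1, pr2 p.2) 1, 0]

/-- The `x₃`-independent magnetic field `B(t,x) = (0, 0, b)(t, x₁, x₂)`. -/
def extB (b : ℝ × (Fin 2 → ℝ) → ℝ) (p : ℝ × (Fin 3 → ℝ)) : Fin 3 → ℝ :=
  ![0, 0, b (p.1, pr2 p.2)]

/-- The pressure `π(t,x) = p(t, x₁, x₂) − b(t, x₁, x₂)²/2`. -/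
def extPi (b prs : ℝ × (Fin 2 → ℝ) → ℝ) (p : ℝ × (Fin 3 → ℝ)) : ℝ :=
  prs (p.1, pr2 p.2) - (b (p.1, pr2 p.2)) ^ 2 / 2

section Aux
open Set

lemma two_eq_last : (2 : Fin 3) = Fin.last 2 := rfl

@[simp] lemma castSucc_zero3 : (Fin.castSucc (0 : Fin 2)) = (0 : Fin 3) := rfl
@[simp] lemma castSucc_one3 : (Fin.castSucc (1 : Fin 2)) = (1 : Fin 3) := rfl

/-- projection to first two space coordinates -/
def r3 (p : ℝ × (Fin 3 → ℝ)) : ℝ × (Fin 2 → ℝ) := (p.1, pr2 p.2)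

/-- insertion of a 2d point into 3d with last coordinate `s` -/
def ins (q : ℝ × (Fin 2 → ℝ)) (s : ℝ) : ℝ × (Fin 3 → ℝ) := (q.1, Fin.snoc q.2 s)

@[simp] lemma r3_ins (q : ℝ × (Fin 2 → ℝ)) (s : ℝ) : r3 (ins q s) = q := by
  refine Prod.ext rfl (funext fun i => ?_)
  simp [r3, ins, pr2]

@[simp] lemma ins_fst (q : ℝ × (Fin 2 → ℝ)) (s : ℝ) : (ins q s).1 = q.1 := rfl

@[simp] lemma ins_snd_two (q : ℝ × (Fin 2 → ℝ)) (s : ℝ) : (ins q s).2 2 = s := by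
  show (Fin.snoc q.2 s : Fin 3 → ℝ) (Fin.last 2) = s; exact Fin.snoc_last _ _

lemma cont_r3 : Continuous r3 :=
  continuous_fst.prodMk (continuous_pi fun i => (continuous_apply i.castSucc).comp continuous_snd)

/-- extension of `ℝ²` to `ℝ³` by zero, as a continuous linear map -/
def extL : (Fin 2 → ℝ) →L[ℝ] (Fin 3 → ℝ) :=
  ContinuousLinearMap.pi (fun j => Fin.lastCases 0 (fun i => ContinuousLinearMap.proj i) j)

lemma extL_apply (y : Fin 2 → ℝ) : extL y = (Fin.snoc y 0 : Fin 3 → ℝ) := by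
  funext j
  refine Fin.lastCases ?_ (fun i => ?_) j
  · simp only [extL, ContinuousLinearMap.pi_apply, Fin.lastCases_last, Fin.snoc_last,
      ContinuousLinearMap.zero_apply]
  · simp [extL, Fin.snoc_castSucc]

def insL : (ℝ × (Fin 2 → ℝ)) →L[ℝ] ℝ × (Fin 3 → ℝ) :=
  (ContinuousLinearMap.fst ℝ ℝ (Fin 2 → ℝ)).prod (extL.comp (ContinuousLinearMap.snd ℝ ℝ (Fin 2 → ℝ)))

lemma ins_eq (s : ℝ) :
    (fun q => ins q s) = fun q : ℝ × (Fin 2 → ℝ) => insL q + ((0:ℝ), Pi.single (2 : Fin 3) s) := by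
  funext q
  refine Prod.ext (by simp [ins, insL]) ?_
  show (Fin.snoc q.2 s : Fin 3 → ℝ) = extL q.2 + Pi.single (2 : Fin 3) s
  rw [extL_apply]
  funext j
  refine Fin.lastCases ?_ (fun i => ?_) j
  · rw [Pi.add_apply, Fin.snoc_last, Fin.snoc_last, two_eq_last, Pi.single_eq_same]; ring
  · have h : (Pi.single (2 : Fin 3) s : Fin 3 → ℝ) i.castSucc = 0 := by
      rw [two_eq_last]; exact Pi.single_eq_of_ne (M := fun _ => ℝ) (Fin.castSucc_lt_last i).ne s
    simp [Fin.snoc_castSucc, h]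

lemma hasFDerivAt_ins (s : ℝ) (q : ℝ × (Fin 2 → ℝ)) :
    HasFDerivAt (fun q' => ins q' s) insL q := by
  rw [ins_eq s]
  exact insL.hasFDerivAt.add_const _

lemma insL_t : insL ((1:ℝ), (0 : Fin 2 → ℝ)) = ((1:ℝ), (0 : Fin 3 → ℝ)) := by
  refine Prod.ext rfl ?_
  show extL 0 = 0
  exact map_zero _

lemma insL_x (j : Fin 2) :
    insL ((0:ℝ), Pi.single j 1) = ((0:ℝ), Pi.single j.castSucc 1) := by
  refine Prod.ext rfl ?_
  show extL ((Pi.single j 1 : Fin 2 → ℝ)) = (Pi.single j.castSucc 1 : Fin 3 → ℝ)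
  rw [extL_apply]
  funext k
  refine Fin.lastCases ?_ (fun i => ?_) k
  · rw [Fin.snoc_last]
    exact (Pi.single_eq_of_ne (M := fun _ => ℝ) (Fin.castSucc_lt_last j).ne' 1).symm
  · rw [Fin.snoc_castSucc]
    simp [Pi.single_apply, Fin.castSucc_inj]

lemma fderiv_comp_ins {f : ℝ × (Fin 3 → ℝ) → ℝ} (hf : ContDiff ℝ (⊤ : ℕ∞) f) (s : ℝ)
    (q : ℝ × (Fin 2 → ℝ)) (v : ℝ × (Fin 2 → ℝ)) :
    fderiv ℝ (fun q' => f (ins q' s)) q v = fderiv ℝ f (ins q s) (insL v) := by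
  have h1 : HasFDerivAt f (fderiv ℝ f (ins q s)) (ins q s) :=
    (hf.differentiable (by simp) (ins q s)).hasFDerivAt
  rw [show (fun q' => f (ins q' s)) = f ∘ (fun q' => ins q' s) from rfl,
    (h1.comp q (hasFDerivAt_ins s q)).fderiv]
  rfl

lemma dt_comp_ins {f : ℝ × (Fin 3 → ℝ) → ℝ} (hf : ContDiff ℝ (⊤ : ℕ∞) f) (s : ℝ)
    (q : ℝ × (Fin 2 → ℝ)) :
    dt (fun q' => f (ins q' s)) q = dt f (ins q s) := by
  unfold dt
  rw [show ((1:ℝ), (0 : Fin 2 → ℝ)) = ((1:ℝ), (0 : Fin 2 → ℝ)) from rfl, fderiv_comp_ins hf s q, insL_t]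

lemma dx_comp_ins {f : ℝ × (Fin 3 → ℝ) → ℝ} (hf : ContDiff ℝ (⊤ : ℕ∞) f) (j : Fin 2) (s : ℝ)
    (q : ℝ × (Fin 2 → ℝ)) :
    dx j (fun q' => f (ins q' s)) q = dx j.castSucc f (ins q s) := by
  unfold dx
  rw [fderiv_comp_ins hf s q, insL_x]

lemma dt_comp_ins' (Φ : ℝ × (Fin 3 → ℝ) → Fin 3 → ℝ) (i : Fin 3)
    (hf : ContDiff ℝ (⊤ : ℕ∞) fun p => Φ p i) (s : ℝ) (q : ℝ × (Fin 2 → ℝ)) :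
    dt (fun q' => Φ (ins q' s) i) q = dt (fun p => Φ p i) (ins q s) := dt_comp_ins hf s q

lemma dx_comp_ins' (Φ : ℝ × (Fin 3 → ℝ) → Fin 3 → ℝ) (j : Fin 2) (i : Fin 3)
    (hf : ContDiff ℝ (⊤ : ℕ∞) fun p => Φ p i) (s : ℝ) (q : ℝ × (Fin 2 → ℝ)) :
    dx j (fun q' => Φ (ins q' s) i) q = dx j.castSucc (fun p => Φ p i) (ins q s) :=
  dx_comp_ins hf j s q

lemma ins_s_eq (q : ℝ × (Fin 2 → ℝ)) :
    (fun s => ins q s) =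
      fun s : ℝ => ((q.1, (Fin.snoc q.2 0 : Fin 3 → ℝ)) : ℝ × (Fin 3 → ℝ))
        + s • (((0:ℝ), Pi.single (2 : Fin 3) (1:ℝ)) : ℝ × (Fin 3 → ℝ)) := by
  funext s
  refine Prod.ext (by simp [ins]) ?_
  show (Fin.snoc q.2 s : Fin 3 → ℝ) =
    (Fin.snoc q.2 0 : Fin 3 → ℝ) + s • (Pi.single (2 : Fin 3) 1 : Fin 3 → ℝ)
  funext j
  refine Fin.lastCases ?_ (fun i => ?_) j
  · rw [Pi.add_apply, Pi.smul_apply, Fin.snoc_last, Fin.snoc_last, two_eq_last,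
      Pi.single_eq_same]; simp
  · have h : (Pi.single (2 : Fin 3) 1 : Fin 3 → ℝ) i.castSucc = 0 := by
      rw [two_eq_last]; exact Pi.single_eq_of_ne (M := fun _ => ℝ) (Fin.castSucc_lt_last i).ne 1
    simp [Fin.snoc_castSucc, h]

lemma hasDerivAt_ins_s {f : ℝ × (Fin 3 → ℝ) → ℝ} (hf : ContDiff ℝ (⊤ : ℕ∞) f)
    (q : ℝ × (Fin 2 → ℝ)) (s : ℝ) :
    HasDerivAt (fun s' => f (ins q s')) (dx 2 f (ins q s)) s := by
  have hpath : HasDerivAt (fun s' => ins q s') (((0:ℝ), Pi.single (2 : Fin 3) 1)) s := by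
    rw [ins_s_eq q]
    simpa using ((hasDerivAt_id s).smul_const
      (((0:ℝ), Pi.single (2 : Fin 3) (1:ℝ)) : ℝ × (Fin 3 → ℝ))).const_add
      (((q.1, (Fin.snoc q.2 0 : Fin 3 → ℝ)) : ℝ × (Fin 3 → ℝ)))
  exact ((hf.differentiable (by simp) (ins q s)).hasFDerivAt).comp_hasDerivAt s hpath

lemma cont_ins_s (q : ℝ × (Fin 2 → ℝ)) : Continuous (fun s => ins q s) := by
  rw [ins_s_eq q]
  exact continuous_const.add (continuous_id.smul continuous_const)

lemma contDiff_ins_s (q : ℝ × (Fin 2 → ℝ)) : ContDiff ℝ (⊤ : ℕ∞) (fun s => ins q s) := by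
  rw [ins_s_eq q]
  exact contDiff_const.add (contDiff_id.smul contDiff_const)

lemma cont_dt {m : ℕ} {f : ℝ × (Fin m → ℝ) → ℝ} (hf : ContDiff ℝ (⊤ : ℕ∞) f) : Continuous (dt f) :=
  (hf.continuous_fderiv (by simp)).clm_apply continuous_const

lemma cont_dx {m : ℕ} (j : Fin m) {f : ℝ × (Fin m → ℝ) → ℝ} (hf : ContDiff ℝ (⊤ : ℕ∞) f) :
    Continuous (dx j f) :=
  (hf.continuous_fderiv (by simp)).clm_apply continuous_const

lemma hcs_dt {m : ℕ} {f : ℝ × (Fin m → ℝ) → ℝ} (hf : HasCompactSupport f) :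
    HasCompactSupport (dt f) := by
  refine hf.mono' fun p hp => support_fderiv_subset ℝ ?_
  refine Function.mem_support.2 fun hz => hp ?_
  simp [dt, hz]

lemma hcs_dx {m : ℕ} (j : Fin m) {f : ℝ × (Fin m → ℝ) → ℝ} (hf : HasCompactSupport f) :
    HasCompactSupport (dx j f) := by
  refine hf.mono' fun p hp => support_fderiv_subset ℝ ?_
  refine Function.mem_support.2 fun hz => hp ?_
  simp [dx, hz]

lemma isTest_comp_ins {f : ℝ × (Fin 3 → ℝ) → ℝ} (hf : IsTest f) (s : ℝ) :
    IsTest fun q => f (ins q s) := by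
  obtain ⟨h1, h2, h3⟩ := hf
  have hcont : Continuous fun q : ℝ × (Fin 2 → ℝ) => ins q s := by
    rw [ins_eq s]; exact insL.continuous.add continuous_const
  refine ⟨?_, ?_, ?_⟩
  · rw [show (fun q => f (ins q s)) = f ∘ fun q => ins q s from rfl]
    refine h1.comp ?_
    rw [ins_eq s]
    exact insL.contDiff.add contDiff_const
  · have hsub : tsupport (fun q => f (ins q s)) ⊆ r3 '' tsupport f := by
      refine closure_minimal (fun q hq => ⟨ins q s, subset_closure hq, r3_ins q s⟩)
        (h2.image cont_r3).isClosed
    exact (h2.image cont_r3).of_isClosed_subset (isClosed_tsupport _) hsub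
  · have hsub : tsupport (fun q => f (ins q s)) ⊆ (fun q => ins q s) ⁻¹' tsupport f :=
      closure_minimal (fun q hq => subset_closure hq)
        (IsClosed.preimage hcont (isClosed_tsupport f))
    exact fun q hq => h3 (hsub hq)

lemma hcs_ins_s {f : ℝ × (Fin 3 → ℝ) → ℝ} (hf : HasCompactSupport f) (q : ℝ × (Fin 2 → ℝ)) :
    HasCompactSupport fun s => f (ins q s) := by
  have hc2 : Continuous fun p : ℝ × (Fin 3 → ℝ) => p.2 2 :=
    (continuous_apply (2 : Fin 3)).comp continuous_snd
  have hsub : tsupport (fun s => f (ins q s)) ⊆ (fun p : ℝ × (Fin 3 → ℝ) => p.2 2) '' tsupport f := by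
    refine closure_minimal (fun s hs => ⟨ins q s, subset_closure hs, ins_snd_two q s⟩)
      (hf.image hc2).isClosed
  exact (hf.image hc2).of_isClosed_subset (isClosed_tsupport _) hsub

lemma integral_dx2_ins {f : ℝ × (Fin 3 → ℝ) → ℝ} (hf : IsTest f) (q : ℝ × (Fin 2 → ℝ)) :
    ∫ s : ℝ, dx 2 f (ins q s) = 0 := by
  set g : ℝ → ℝ := fun s => f (ins q s) with hg
  have hder : ∀ s, HasDerivAt g (dx 2 f (ins q s)) s := fun s => hasDerivAt_ins_s hf.1 q s
  have hgC : ContDiff ℝ 1 g := ((hf.1.of_le (by simp)).comp ((contDiff_ins_s q).of_le (by simp)))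
  have hgcs : HasCompactSupport g := hcs_ins_s hf.2.1 q
  have hderiv_eq : deriv g = fun s => dx 2 f (ins q s) := funext fun s => (hder s).deriv
  have hint : Integrable (deriv g) := by
    rw [hderiv_eq]
    exact ((cont_dx 2 hf.1).comp (cont_ins_s q)).integrable_of_hasCompactSupport
      (hcs_ins_s (hcs_dx 2 hf.2.1) q)
  have hIic := hgcs.integral_Iic_deriv_eq hgC 0
  have hIoi := hgcs.integral_Ioi_deriv_eq hgC 0
  calc ∫ s : ℝ, dx 2 f (ins q s) = ∫ s : ℝ, deriv g s := by rw [hderiv_eq]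
    _ = (∫ s in Iic (0:ℝ), deriv g s) + ∫ s in Ioi (0:ℝ), deriv g s :=
        (intervalIntegral.integral_Iic_add_Ioi hint.integrableOn hint.integrableOn).symm
    _ = 0 := by rw [hIic, hIoi]; ring

end Aux
section Fubini

def insEquiv : ((ℝ × (Fin 2 → ℝ)) × ℝ) ≃ᵐ ℝ × (Fin 3 → ℝ) :=
  MeasurableEquiv.prodAssoc.trans ((MeasurableEquiv.refl ℝ).prodCongr
    ((MeasurableEquiv.prodComm : (Fin 2 → ℝ) × ℝ ≃ᵐ ℝ × (Fin 2 → ℝ)).trans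
      (MeasurableEquiv.piFinSuccAbove (fun _ : Fin 3 => ℝ) 2).symm))

lemma insEquiv_apply (q : ℝ × (Fin 2 → ℝ)) (s : ℝ) : insEquiv (q, s) = ins q s := by
  have h2 : (insEquiv (q, s)).2 = (ins q s).2 := by
    show Fin.insertNth 2 s q.2 = (Fin.snoc q.2 s : Fin 3 → ℝ)
    rw [two_eq_last]
    exact Fin.insertNth_last' s q.2
  exact Prod.ext rfl h2

lemma mp_insEquiv : MeasurePreserving insEquiv volume volume := by
  have h2 : MeasurePreserving
      ((MeasurableEquiv.prodComm : (Fin 2 → ℝ) × ℝ ≃ᵐ ℝ × (Fin 2 → ℝ)).trans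
        (MeasurableEquiv.piFinSuccAbove (fun _ : Fin 3 => ℝ) 2).symm) volume volume := by
    have hsw : MeasurePreserving (Prod.swap : (Fin 2 → ℝ) × ℝ → ℝ × (Fin 2 → ℝ))
        (volume.prod volume) (volume.prod volume) := Measure.measurePreserving_swap
    rw [← Measure.volume_eq_prod, ← Measure.volume_eq_prod] at hsw
    exact ((volume_preserving_piFinSuccAbove (fun _ : Fin 3 => ℝ) 2).symm _).comp hsw
  have h3 : MeasurePreserving ((MeasurableEquiv.refl ℝ).prodCongr
      ((MeasurableEquiv.prodComm : (Fin 2 → ℝ) × ℝ ≃ᵐ ℝ × (Fin 2 → ℝ)).trans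
        (MeasurableEquiv.piFinSuccAbove (fun _ : Fin 3 => ℝ) 2).symm))
      (volume.prod volume) (volume.prod volume) :=
    (MeasurePreserving.id volume).prod h2
  rw [← Measure.volume_eq_prod] at h3
  have h1 : MeasurePreserving
      (MeasurableEquiv.prodAssoc : ((ℝ × (Fin 2 → ℝ)) × ℝ) ≃ᵐ ℝ × ((Fin 2 → ℝ) × ℝ))
      volume volume := volume_preserving_prodAssoc
  exact h3.comp h1

lemma integral_ins (F : ℝ × (Fin 3 → ℝ) → ℝ) (hF : Integrable F) :
    (∫ p, F p) = ∫ s : ℝ, ∫ q : ℝ × (Fin 2 → ℝ), F (ins q s) := by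
  have h0 : (∫ z : (ℝ × (Fin 2 → ℝ)) × ℝ, F (insEquiv z)) = ∫ p, F p :=
    mp_insEquiv.integral_comp insEquiv.measurableEmbedding F
  have hI : Integrable (F ∘ insEquiv) volume :=
    (mp_insEquiv.integrable_comp_emb insEquiv.measurableEmbedding).2 hF
  rw [Measure.volume_eq_prod] at hI
  rw [← h0]
  rw [show (volume : Measure ((ℝ × (Fin 2 → ℝ)) × ℝ)) = volume.prod volume from
    Measure.volume_eq_prod _ _]
  rw [MeasureTheory.integral_prod_symm (fun z : (ℝ × (Fin 2 → ℝ)) × ℝ => F (insEquiv z)) hI]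
  simp only [Function.comp, insEquiv_apply]

lemma integral_ins' (F : ℝ × (Fin 3 → ℝ) → ℝ) (hF : Integrable F) :
    (∫ p, F p) = ∫ q : ℝ × (Fin 2 → ℝ), ∫ s : ℝ, F (ins q s) := by
  have h0 : (∫ z : (ℝ × (Fin 2 → ℝ)) × ℝ, F (insEquiv z)) = ∫ p, F p :=
    mp_insEquiv.integral_comp insEquiv.measurableEmbedding F
  have hI : Integrable (F ∘ insEquiv) volume :=
    (mp_insEquiv.integrable_comp_emb insEquiv.measurableEmbedding).2 hF
  rw [Measure.volume_eq_prod] at hI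
  rw [← h0]
  rw [show (volume : Measure ((ℝ × (Fin 2 → ℝ)) × ℝ)) = volume.prod volume from
    Measure.volume_eq_prod _ _]
  rw [MeasureTheory.integral_prod (fun z : (ℝ × (Fin 2 → ℝ)) × ℝ => F (insEquiv z)) hI]
  simp only [Function.comp, insEquiv_apply]

lemma vanish_fst {F : ℝ × (Fin 3 → ℝ) → ℝ} (hF : Integrable F)
    (h : ∀ s, (∫ q : ℝ × (Fin 2 → ℝ), F (ins q s)) = 0) : (∫ p, F p) = 0 := by
  rw [integral_ins F hF]
  simp [h]

lemma vanish_snd {F : ℝ × (Fin 3 → ℝ) → ℝ} (hF : Integrable F)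
    (h : ∀ q, (∫ s : ℝ, F (ins q s)) = 0) : (∫ p, F p) = 0 := by
  rw [integral_ins' F hF]
  simp [h]

lemma integrable_mul' (c : ℝ × (Fin 2 → ℝ) → ℝ) (hc : Measurable c)
    (hcb : ∀ K : Set (ℝ × (Fin 2 → ℝ)), IsCompact K → ∃ C : ℝ, ∀ q ∈ K, |c q| ≤ C)
    (g : ℝ × (Fin 3 → ℝ) → ℝ) (hg : Continuous g) (hgs : HasCompactSupport g) :
    Integrable fun p => c (r3 p) * g p := by
  obtain ⟨D, hD⟩ := hgs.exists_bound_of_continuous hg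
  obtain ⟨C, hC⟩ := hcb (r3 '' tsupport g) (hgs.image cont_r3)
  set K := tsupport g with hK
  have hKm : MeasurableSet K := (isClosed_tsupport g).measurableSet
  refine Integrable.mono' (g := K.indicator fun _ => max C 0 * max D 0) ?_ ?_ ?_
  · exact (integrable_indicator_iff hKm).2 (integrableOn_const hgs.measure_lt_top.ne)
  · exact ((hc.comp cont_r3.measurable).mul hg.measurable).aestronglyMeasurable
  · refine Filter.Eventually.of_forall fun p => ?_
    by_cases hp : p ∈ K
    · rw [Set.indicator_of_mem hp]
      have h1 : |c (r3 p)| ≤ max C 0 := le_trans (hC _ ⟨p, hp, rfl⟩) (le_max_left _ _)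
      have h2 : |g p| ≤ max D 0 := le_trans (hD p) (le_max_left _ _)
      calc ‖c (r3 p) * g p‖ = |c (r3 p)| * |g p| := abs_mul _ _
        _ ≤ max C 0 * max D 0 := mul_le_mul h1 h2 (abs_nonneg _) (le_max_right _ _)
    · rw [Set.indicator_of_notMem hp]
      have hz : g p = 0 := image_eq_zero_of_notMem_tsupport hp
      simp [hz]

lemma key_dx2 (c : ℝ × (Fin 2 → ℝ) → ℝ) (hc : Measurable c)
    (hcb : ∀ K : Set (ℝ × (Fin 2 → ℝ)), IsCompact K → ∃ C : ℝ, ∀ q ∈ K, |c q| ≤ C)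
    (f : ℝ × (Fin 3 → ℝ) → ℝ) (hf : IsTest f) :
    (∫ p, c (r3 p) * dx 2 f p) = 0 := by
  refine vanish_snd (integrable_mul' c hc hcb _ (cont_dx 2 hf.1) (hcs_dx 2 hf.2.1)) fun q => ?_
  have h1 : (fun s => c (r3 (ins q s)) * dx 2 f (ins q s))
      = fun s => c q * dx 2 f (ins q s) := by
    funext s; rw [r3_ins]
  rw [h1, MeasureTheory.integral_const_mul, integral_dx2_ins hf q, mul_zero]

end Fubini

/-- If `(b, u, p)` are locally bounded measurable functions solving, in
the distributional sense on `(0,∞) × ℝ²`, the 2D incompressible Euler system with a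
passive tracer `∂ₜu + div(u ⊗ u) + ∇p = 0`, `∂ₜb + div(b u) = 0`, `div u = 0`, then the
`x₃`-independent fields `U = (u₁, u₂, 0)`, `B = (0, 0, b)` and `π = p − b²/2` form a
distributional solution of the 3D ideal MHD equations:
`∂ₜU + (U·∇)U − (curl B) × B + ∇π = 0`, `∂ₜB − curl(U × B) = 0`, `div U = 0`, `div B = 0`
(for the momentum equation one uses `(curl B) × B = div(B ⊗ B) − ∇(|B|²/2)`, valid for
divergence-free `B`). -/
theorem tracer2D_gives_idealMHD3D
    (b prs : ℝ × (Fin 2 → ℝ) → ℝ) (u : ℝ × (Fin 2 → ℝ) → Fin 2 → ℝ)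
    -- measurability and local boundedness
    (hbm : Measurable b) (hpm : Measurable prs) (hum : ∀ i, Measurable fun p => u p i)
    (hloc : ∀ K : Set (ℝ × (Fin 2 → ℝ)), IsCompact K →
      ∃ C : ℝ, ∀ p ∈ K, |b p| ≤ C ∧ |prs p| ≤ C ∧ ∀ i, |u p i| ≤ C)
    -- 2D momentum equation `∂ₜu + div(u ⊗ u) + ∇p = 0` in the distributional sense
    (hmom : ∀ Φ : ℝ × (Fin 2 → ℝ) → Fin 2 → ℝ, (∀ i, IsTest fun p => Φ p i) →
      ∫ p : ℝ × (Fin 2 → ℝ),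
        (∑ i, u p i * dt (fun p' => Φ p' i) p +
          ∑ i, ∑ j, u p i * u p j * dx j (fun p' => Φ p' i) p +
          prs p * ∑ i, dx i (fun p' => Φ p' i) p) = 0)
    -- 2D tracer equation `∂ₜb + div(b u) = 0`
    (htr : ∀ φ : ℝ × (Fin 2 → ℝ) → ℝ, IsTest φ →
      ∫ p : ℝ × (Fin 2 → ℝ),
        (b p * dt φ p + ∑ j, (b p * u p j) * dx j φ p) = 0)
    -- 2D incompressibility `div u = 0`
    (hdiv : ∀ ψ : ℝ × (Fin 2 → ℝ) → ℝ, IsTest ψ →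
      ∫ p : ℝ × (Fin 2 → ℝ), (∑ i, u p i * dx i ψ p) = 0) :
    -- 3D momentum equation
    -- `∂ₜU + div(U ⊗ U − B ⊗ B) + ∇(π + |B|²/2) = 0`
    (∀ Φ : ℝ × (Fin 3 → ℝ) → Fin 3 → ℝ, (∀ i, IsTest fun p => Φ p i) →
      ∫ p : ℝ × (Fin 3 → ℝ),
        (∑ i, extU u p i * dt (fun p' => Φ p' i) p +
          ∑ i, ∑ j, (extU u p i * extU u p j - extB b p i * extB b p j) *
            dx j (fun p' => Φ p' i) p +
          (extPi b prs p + (∑ i, extB b p i ^ 2) / 2) *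
            ∑ i, dx i (fun p' => Φ p' i) p) = 0) ∧
    -- 3D induction equation `∂ₜB − curl(U × B) = 0`
    (∀ Ψ : ℝ × (Fin 3 → ℝ) → Fin 3 → ℝ, (∀ i, IsTest fun p => Ψ p i) →
      ∫ p : ℝ × (Fin 3 → ℝ),
        (∑ i, extB b p i * dt (fun p' => Ψ p' i) p +
          ∑ i, cross3 (extU u p) (extB b p) i * curl3 Ψ p i) = 0) ∧
    -- `div U = 0`
    (∀ ψ : ℝ × (Fin 3 → ℝ) → ℝ, IsTest ψ →
      ∫ p : ℝ × (Fin 3 → ℝ), (∑ i, extU u p i * dx i ψ p) = 0) ∧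
    -- `div B = 0`
    (∀ ψ : ℝ × (Fin 3 → ℝ) → ℝ, IsTest ψ →
      ∫ p : ℝ × (Fin 3 → ℝ), (∑ i, extB b p i * dx i ψ p) = 0) := by
  classical
  have locb : ∀ K : Set (ℝ × (Fin 2 → ℝ)), IsCompact K → ∃ C : ℝ, ∀ q ∈ K, |b q| ≤ C :=
    fun K hK => ⟨(hloc K hK).choose, fun q hq => ((hloc K hK).choose_spec q hq).1⟩
  have locp : ∀ K : Set (ℝ × (Fin 2 → ℝ)), IsCompact K → ∃ C : ℝ, ∀ q ∈ K, |prs q| ≤ C :=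
    fun K hK => ⟨(hloc K hK).choose, fun q hq => ((hloc K hK).choose_spec q hq).2.1⟩
  have locu : ∀ i : Fin 2, ∀ K : Set (ℝ × (Fin 2 → ℝ)), IsCompact K →
      ∃ C : ℝ, ∀ q ∈ K, |u q i| ≤ C :=
    fun i K hK => ⟨(hloc K hK).choose, fun q hq => ((hloc K hK).choose_spec q hq).2.2 i⟩
  have locuu : ∀ i j : Fin 2, ∀ K : Set (ℝ × (Fin 2 → ℝ)), IsCompact K →
      ∃ C : ℝ, ∀ q ∈ K, |u q i * u q j| ≤ C := by
    intro i j K hK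
    obtain ⟨C, hC⟩ := hloc K hK
    refine ⟨C * C, fun q hq => ?_⟩
    rw [abs_mul]
    exact mul_le_mul ((hC q hq).2.2 i) ((hC q hq).2.2 j) (abs_nonneg _)
      (le_trans (abs_nonneg _) ((hC q hq).2.2 i))
  have locnbu : ∀ j : Fin 2, ∀ K : Set (ℝ × (Fin 2 → ℝ)), IsCompact K →
      ∃ C : ℝ, ∀ q ∈ K, |-(b q * u q j)| ≤ C := by
    intro j K hK
    obtain ⟨C, hC⟩ := hloc K hK
    refine ⟨C * C, fun q hq => ?_⟩
    rw [abs_neg, abs_mul]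
    exact mul_le_mul (hC q hq).1 ((hC q hq).2.2 j) (abs_nonneg _)
      (le_trans (abs_nonneg _) (hC q hq).1)
  have locbu : ∀ j : Fin 2, ∀ K : Set (ℝ × (Fin 2 → ℝ)), IsCompact K →
      ∃ C : ℝ, ∀ q ∈ K, |b q * u q j| ≤ C := by
    intro j K hK
    obtain ⟨C, hC⟩ := locnbu j K hK
    exact ⟨C, fun q hq => by have := hC q hq; rwa [abs_neg] at this⟩
  have locpb : ∀ K : Set (ℝ × (Fin 2 → ℝ)), IsCompact K →
      ∃ C : ℝ, ∀ q ∈ K, |prs q - b q ^ 2| ≤ C := by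
    intro K hK
    obtain ⟨C, hC⟩ := hloc K hK
    refine ⟨C + C * C, fun q hq => ?_⟩
    refine le_trans (abs_sub _ _) (add_le_add (hC q hq).2.1 ?_)
    have h1 : |b q ^ 2| = |b q| * |b q| := by rw [sq, abs_mul]
    rw [h1]
    exact mul_le_mul (hC q hq).1 (hC q hq).1 (abs_nonneg _)
      (le_trans (abs_nonneg _) (hC q hq).1)
  refine ⟨?_, ?_, ?_, ?_⟩
  -- momentum equation
  · intro Φ hΦ
    set A : ℝ × (Fin 3 → ℝ) → ℝ := fun p =>
      (fun q => u q 0) (r3 p) * dt (fun p' => Φ p' 0) p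
      + (fun q => u q 1) (r3 p) * dt (fun p' => Φ p' 1) p
      + (fun q => u q 0 * u q 0) (r3 p) * dx 0 (fun p' => Φ p' 0) p
      + (fun q => u q 0 * u q 1) (r3 p) * dx 1 (fun p' => Φ p' 0) p
      + (fun q => u q 1 * u q 0) (r3 p) * dx 0 (fun p' => Φ p' 1) p
      + (fun q => u q 1 * u q 1) (r3 p) * dx 1 (fun p' => Φ p' 1) p
      + prs (r3 p) * (dx 0 (fun p' => Φ p' 0) p + dx 1 (fun p' => Φ p' 1) p)
      with hAdef
    set C : ℝ × (Fin 3 → ℝ) → ℝ := fun p =>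
      (fun q => prs q - b q ^ 2) (r3 p) * dx 2 (fun p' => Φ p' 2) p with hCdef
    have hptw : ∀ p : ℝ × (Fin 3 → ℝ),
        (∑ i, extU u p i * dt (fun p' => Φ p' i) p +
          ∑ i, ∑ j, (extU u p i * extU u p j - extB b p i * extB b p j) *
            dx j (fun p' => Φ p' i) p +
          (extPi b prs p + (∑ i, extB b p i ^ 2) / 2) *
            ∑ i, dx i (fun p' => Φ p' i) p) = A p + C p := by
      intro p
      rw [hAdef, hCdef]
      simp only [extU, extB, extPi, Fin.sum_univ_three, r3, Matrix.cons_val_zero,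
        Matrix.cons_val_one, Matrix.head_cons, Matrix.cons_val_two, Matrix.tail_cons]
      ring
    have hA : Integrable A := by
      rw [hAdef]
      exact ((((((integrable_mul' (fun q => u q 0) (hum 0) (locu 0) _
          (cont_dt (hΦ 0).1) (hcs_dt (hΦ 0).2.1)).add
        (integrable_mul' (fun q => u q 1) (hum 1) (locu 1) _
          (cont_dt (hΦ 1).1) (hcs_dt (hΦ 1).2.1))).add
        (integrable_mul' (fun q => u q 0 * u q 0) ((hum 0).mul (hum 0)) (locuu 0 0) _
          (cont_dx 0 (hΦ 0).1) (hcs_dx 0 (hΦ 0).2.1))).add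
        (integrable_mul' (fun q => u q 0 * u q 1) ((hum 0).mul (hum 1)) (locuu 0 1) _
          (cont_dx 1 (hΦ 0).1) (hcs_dx 1 (hΦ 0).2.1))).add
        (integrable_mul' (fun q => u q 1 * u q 0) ((hum 1).mul (hum 0)) (locuu 1 0) _
          (cont_dx 0 (hΦ 1).1) (hcs_dx 0 (hΦ 1).2.1))).add
        (integrable_mul' (fun q => u q 1 * u q 1) ((hum 1).mul (hum 1)) (locuu 1 1) _
          (cont_dx 1 (hΦ 1).1) (hcs_dx 1 (hΦ 1).2.1))).add
        (integrable_mul' prs hpm locp _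
          ((cont_dx 0 (hΦ 0).1).add (cont_dx 1 (hΦ 1).1))
          ((hcs_dx 0 (hΦ 0).2.1).add (hcs_dx 1 (hΦ 1).2.1)))
    have hC : Integrable C := by
      rw [hCdef]
      exact integrable_mul' (fun q => prs q - b q ^ 2) (hpm.sub (hbm.pow_const 2)) locpb _
        (cont_dx 2 (hΦ 2).1) (hcs_dx 2 (hΦ 2).2.1)
    rw [integral_congr_ae (Filter.Eventually.of_forall hptw), integral_add hA hC]
    have hC0 : (∫ p, C p) = 0 := by
      rw [hCdef]
      exact key_dx2 _ (hpm.sub (hbm.pow_const 2)) locpb _ (hΦ 2)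
    have hA0 : (∫ p, A p) = 0 := by
      refine vanish_fst hA fun s => ?_
      have htest : ∀ i : Fin 2, IsTest fun q => Φ (ins q s) (Fin.castSucc i) :=
        fun i => isTest_comp_ins (hΦ i.castSucc) s
      have h2d := hmom (fun q' i => Φ (ins q' s) (Fin.castSucc i)) htest
      have hfe : ∀ q : ℝ × (Fin 2 → ℝ), A (ins q s) =
          (∑ i, u q i * dt (fun p' => Φ (ins p' s) (Fin.castSucc i)) q +
            ∑ i, ∑ j, u q i * u q j * dx j (fun p' => Φ (ins p' s) (Fin.castSucc i)) q +
            prs q * ∑ i, dx i (fun p' => Φ (ins p' s) (Fin.castSucc i)) q) := by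
        intro q
        rw [hAdef]
        simp only [Fin.sum_univ_two, castSucc_zero3, castSucc_one3, r3_ins]
        rw [dt_comp_ins' Φ 0 (hΦ 0).1 s q, dt_comp_ins' Φ 1 (hΦ 1).1 s q,
          dx_comp_ins' Φ 0 0 (hΦ 0).1 s q, dx_comp_ins' Φ 1 0 (hΦ 0).1 s q,
          dx_comp_ins' Φ 0 1 (hΦ 1).1 s q, dx_comp_ins' Φ 1 1 (hΦ 1).1 s q]
        simp only [castSucc_zero3, castSucc_one3]
        ring
      rw [integral_congr_ae (Filter.Eventually.of_forall hfe)]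
      exact h2d
    rw [hA0, hC0]
    norm_num
  -- induction equation
  · intro Ψ hΨ
    set A : ℝ × (Fin 3 → ℝ) → ℝ := fun p =>
      b (r3 p) * dt (fun p' => Ψ p' 2) p
      + (fun q => b q * u q 0) (r3 p) * dx 0 (fun p' => Ψ p' 2) p
      + (fun q => b q * u q 1) (r3 p) * dx 1 (fun p' => Ψ p' 2) p with hAdef
    set C : ℝ × (Fin 3 → ℝ) → ℝ := fun p =>
      (fun q => -(b q * u q 0)) (r3 p) * dx 2 (fun p' => Ψ p' 0) p
      + (fun q => -(b q * u q 1)) (r3 p) * dx 2 (fun p' => Ψ p' 1) p with hCdef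
    have hptw : ∀ p : ℝ × (Fin 3 → ℝ),
        (∑ i, extB b p i * dt (fun p' => Ψ p' i) p +
          ∑ i, cross3 (extU u p) (extB b p) i * curl3 Ψ p i) = A p + C p := by
      intro p
      rw [hAdef, hCdef]
      simp only [extU, extB, cross3, curl3, Fin.sum_univ_three, r3, Matrix.cons_val_zero,
        Matrix.cons_val_one, Matrix.head_cons, Matrix.cons_val_two, Matrix.tail_cons]
      ring
    have hA : Integrable A := by
      rw [hAdef]
      exact ((integrable_mul' b hbm locb _ (cont_dt (hΨ 2).1) (hcs_dt (hΨ 2).2.1)).add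
        (integrable_mul' (fun q => b q * u q 0) (hbm.mul (hum 0)) (locbu 0) _
          (cont_dx 0 (hΨ 2).1) (hcs_dx 0 (hΨ 2).2.1))).add
        (integrable_mul' (fun q => b q * u q 1) (hbm.mul (hum 1)) (locbu 1) _
          (cont_dx 1 (hΨ 2).1) (hcs_dx 1 (hΨ 2).2.1))
    have hC : Integrable C := by
      rw [hCdef]
      exact (integrable_mul' (fun q => -(b q * u q 0)) (hbm.mul (hum 0)).neg (locnbu 0) _
        (cont_dx 2 (hΨ 0).1) (hcs_dx 2 (hΨ 0).2.1)).add
        (integrable_mul' (fun q => -(b q * u q 1)) (hbm.mul (hum 1)).neg (locnbu 1) _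
          (cont_dx 2 (hΨ 1).1) (hcs_dx 2 (hΨ 1).2.1))
    rw [integral_congr_ae (Filter.Eventually.of_forall hptw), integral_add hA hC]
    have hC0 : (∫ p, C p) = 0 := by
      rw [hCdef]
      rw [integral_add
        (integrable_mul' (fun q => -(b q * u q 0)) (hbm.mul (hum 0)).neg (locnbu 0) _
          (cont_dx 2 (hΨ 0).1) (hcs_dx 2 (hΨ 0).2.1))
        (integrable_mul' (fun q => -(b q * u q 1)) (hbm.mul (hum 1)).neg (locnbu 1) _
          (cont_dx 2 (hΨ 1).1) (hcs_dx 2 (hΨ 1).2.1))]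
      rw [key_dx2 (fun q => -(b q * u q 0)) (hbm.mul (hum 0)).neg (locnbu 0) _ (hΨ 0),
        key_dx2 (fun q => -(b q * u q 1)) (hbm.mul (hum 1)).neg (locnbu 1) _ (hΨ 1)]
      norm_num
    have hA0 : (∫ p, A p) = 0 := by
      refine vanish_fst hA fun s => ?_
      have h2d := htr (fun q' => Ψ (ins q' s) 2) (isTest_comp_ins (hΨ 2) s)
      have hfe : ∀ q : ℝ × (Fin 2 → ℝ), A (ins q s) =
          (b q * dt (fun q' => Ψ (ins q' s) 2) q +
            ∑ j, (b q * u q j) * dx j (fun q' => Ψ (ins q' s) 2) q) := by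
        intro q
        rw [hAdef]
        simp only [Fin.sum_univ_two, r3_ins]
        rw [dt_comp_ins' Ψ 2 (hΨ 2).1 s q,
          dx_comp_ins' Ψ 0 2 (hΨ 2).1 s q, dx_comp_ins' Ψ 1 2 (hΨ 2).1 s q]
        simp only [castSucc_zero3, castSucc_one3]
        ring
      rw [integral_congr_ae (Filter.Eventually.of_forall hfe)]
      exact h2d
    rw [hA0, hC0]
    norm_num
  -- div U = 0
  · intro ψ hψ
    set A : ℝ × (Fin 3 → ℝ) → ℝ := fun p =>
      (fun q => u q 0) (r3 p) * dx 0 ψ p + (fun q => u q 1) (r3 p) * dx 1 ψ p with hAdef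
    have hptw : ∀ p : ℝ × (Fin 3 → ℝ), (∑ i, extU u p i * dx i ψ p) = A p := by
      intro p
      rw [hAdef]
      simp only [extU, Fin.sum_univ_three, r3, Matrix.cons_val_zero,
        Matrix.cons_val_one, Matrix.head_cons, Matrix.cons_val_two, Matrix.tail_cons]
      ring
    have hA : Integrable A := by
      rw [hAdef]
      exact (integrable_mul' (fun q => u q 0) (hum 0) (locu 0) _
          (cont_dx 0 hψ.1) (hcs_dx 0 hψ.2.1)).add
        (integrable_mul' (fun q => u q 1) (hum 1) (locu 1) _
          (cont_dx 1 hψ.1) (hcs_dx 1 hψ.2.1))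
    rw [integral_congr_ae (Filter.Eventually.of_forall hptw)]
    refine vanish_fst hA fun s => ?_
    have h2d := hdiv (fun q' => ψ (ins q' s)) (isTest_comp_ins hψ s)
    have hfe : ∀ q : ℝ × (Fin 2 → ℝ), A (ins q s) =
        (∑ i, u q i * dx i (fun q' => ψ (ins q' s)) q) := by
      intro q
      rw [hAdef]
      simp only [Fin.sum_univ_two, r3_ins]
      rw [dx_comp_ins hψ.1 0 s q, dx_comp_ins hψ.1 1 s q]
      simp only [castSucc_zero3, castSucc_one3]
    rw [integral_congr_ae (Filter.Eventually.of_forall hfe)]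
    exact h2d
  -- div B = 0
  · intro ψ hψ
    have hptw : ∀ p : ℝ × (Fin 3 → ℝ), (∑ i, extB b p i * dx i ψ p) = b (r3 p) * dx 2 ψ p := by
      intro p
      simp only [extB, Fin.sum_univ_three, r3, Matrix.cons_val_zero,
        Matrix.cons_val_one, Matrix.head_cons, Matrix.cons_val_two, Matrix.tail_cons]
      ring
    rw [integral_congr_ae (Filter.Eventually.of_forall hptw)]
    exact key_dx2 b hbm locb ψ hψ

end
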